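/- arXiv:1712.00274 — 5 statements merged into one kernel-verified Lean document; each statement's English description precedes it below -/
import Mathlib

section
/- For every integer n ≥ 2 and real c with 0 ≤ c < 1, the equation z^n = 1 - n·c + n·z has a unique solution z in the open interval (1, ∞). -/
open Set Filter

theorem StrictMonoOn.existsUnique_gt_eq_of_tendsto_atTop
    {α δ : Type*} [ConditionallyCompleteLinearOrder α] [TopologicalSpace α] [OrderTopology α]
    [DenselyOrdered α] [LinearOrder δ] [TopologicalSpace δ] [OrderClosedTopology δ]
    {f : α → δ} {a : α} {t : δ} (hmono : StrictMonoOn f (Ici a)) (hf : ContinuousOn f (Ici a))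
    (htop : Tendsto f atTop atTop) (ht : f a < t) :
    ∃! z, a < z ∧ f z = t := by
  obtain ⟨z, hz, rfl⟩ := intermediate_value_Ioi hf htop ht
  refine ⟨z, ⟨hz, rfl⟩, fun y ⟨hy, hyz⟩ => ?_⟩
  exact hmono.injOn (mem_Ici_of_Ioi hy) (mem_Ici_of_Ioi hz) hyz

theorem strictMonoOn_pow_sub_mul {n : ℕ} (hn : 2 ≤ n) :
    StrictMonoOn (fun z : ℝ => z ^ n - n * z) (Ici 1) := by
  refine strictMonoOn_of_deriv_pos (convex_Ici 1) (by fun_prop) fun x hx => ?_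
  rw [interior_Ici] at hx
  have hderiv : HasDerivAt (fun z : ℝ => z ^ n - n * z) (n * x ^ (n - 1) - n * 1) x :=
    (hasDerivAt_pow n x).sub ((hasDerivAt_id x).const_mul (n : ℝ))
  have hpow : 1 < x ^ (n - 1) := one_lt_pow₀ hx (by omega)
  rw [hderiv.deriv, ← mul_sub]
  exact mul_pos (by positivity) (by linarith)

theorem tendsto_pow_sub_mul_atTop {n : ℕ} (hn : 2 ≤ n) :
    Tendsto (fun z : ℝ => z ^ n - n * z) atTop atTop := by
  have hfactor : ∀ z : ℝ, z * (z ^ (n - 1) - n) = z ^ n - n * z := fun z => by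
    rw [mul_sub, ← pow_succ', Nat.sub_add_cancel (by omega), mul_comm]
  refine (tendsto_id.atTop_mul_atTop₀ ?_).congr hfactor
  exact tendsto_atTop_add_const_right _ _ (tendsto_pow_atTop (by omega))

theorem silent_duel_unique_root_general (n : ℕ) (hn : 2 ≤ n) (c : ℝ) (hc1 : c < 1) :
    ∃! z : ℝ, 1 < z ∧ z ^ n = 1 - n * c + n * z := by
  have hn0 : (0 : ℝ) < n := by positivity
  have hstart : (1 : ℝ) ^ n - n * 1 < 1 - n * c := by
    rw [one_pow, mul_one]
    nlinarith
  obtain ⟨z, hz, huniq⟩ := (strictMonoOn_pow_sub_mul hn).existsUnique_gt_eq_of_tendsto_atTop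
    (by fun_prop) (tendsto_pow_sub_mul_atTop hn) hstart
  refine ⟨z, ⟨hz.1, by linarith [hz.2]⟩, fun y hy => huniq y ⟨hy.1, by linarith [hy.2]⟩⟩

theorem silent_duel_unique_root (n : ℕ) (hn : 2 ≤ n) (c : ℝ) (hc0 : 0 ≤ c) (hc1 : c < 1) :
    ∃! z : ℝ, 1 < z ∧ z ^ n = 1 - n * c + n * z :=
  silent_duel_unique_root_general n hn c hc1
end

section
/- For every integer n ≥ 2, setting c = 1/n, v = 1/n and p = (1/n)^(1/(n-1)) satisfy both the polynomial relation (1/p)^n = 1 - n·c + n·(1/p) and v = p^(n-1), and the upper support endpoint is b = (1 - v)/(1 - c·v) = n/(n+1). -/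
/-!
Since `1/n` is positive, `p = (1/n)^(1/(n-1))` is its genuine `(n-1)`-st root, so `p^(n-1) = 1/n`
and `(1/p)^(n-1) = n`. Multiplying by `1/p` gives `(1/p)^n = n/p`, which is the polynomial relation
because `1 - n c = 0`. The endpoint is `(1 - 1/n)/(1 - 1/n²) = n/(n+1)` after cancelling `n - 1`.
-/

lemma Real.rpow_one_div_natCast_sub_one_pow {x : ℝ} (hx : 0 ≤ x) {n : ℕ} (hn : 2 ≤ n) :
    (x ^ (1 / ((n : ℝ) - 1))) ^ (n - 1) = x := by
  have hcast : ((n - 1 : ℕ) : ℝ) = (n : ℝ) - 1 := by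
    rw [Nat.cast_sub (by omega), Nat.cast_one]
  rw [← hcast, one_div]
  exact Real.rpow_inv_natCast_pow hx (by omega)

lemma pow_eq_mul_of_pow_pred_eq {R : Type*} [Monoid R] {q a : R} {n : ℕ} (hn : n ≠ 0)
    (hq : q ^ (n - 1) = a) : q ^ n = a * q := by
  rw [← hq, ← pow_succ, Nat.sub_add_cancel (Nat.one_le_iff_ne_zero.mpr hn)]

lemma one_sub_one_div_div_one_sub_one_div_mul_self {x : ℝ} (hx : 1 < x) :
    (1 - 1 / x) / (1 - 1 / x * (1 / x)) = x / (x + 1) := by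
  have hx0 : x ≠ 0 := by positivity
  have hx1 : 1 - 1 / x ≠ 0 := (sub_pos.mpr ((div_lt_one (by positivity)).mpr hx)).ne'
  have hden : 1 - 1 / x * (1 / x) = (1 - 1 / x) * ((x + 1) / x) := by
    field_simp
    ring
  rw [hden, div_mul_cancel_left₀ hx1, inv_div]

theorem constant_sum_case (n : ℕ) (hn : 2 ≤ n) (c v p : ℝ)
    (hc : c = 1 / n) (hv : v = 1 / n)
    (hp : p = (1 / (n : ℝ)) ^ ((1 : ℝ) / ((n : ℝ) - 1))) :
    (1 / p) ^ n = 1 - n * c + n * (1 / p) ∧ v = p ^ (n - 1) ∧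
      (1 - v) / (1 - c * v) = n / (n + 1) := by
  subst hc hv
  have hn_pos : (0 : ℝ) < n := by positivity
  have hp_pow : p ^ (n - 1) = 1 / n := by
    rw [hp]
    exact Real.rpow_one_div_natCast_sub_one_pow (by positivity) hn
  have hp_inv_pow : (1 / p) ^ (n - 1) = n := by
    rw [div_pow, one_pow, hp_pow, one_div_one_div]
  refine ⟨?_, hp_pow.symm, one_sub_one_div_div_one_sub_one_div_mul_self (by exact_mod_cast hn)⟩
  rw [pow_eq_mul_of_pow_pred_eq (by omega) hp_inv_pow, mul_one_div_cancel hn_pos.ne']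
  ring
end

section
/- Let n ≥ 2, 0 ≤ c < 1, and suppose p ∈ (0,1) satisfies n·p^(n-1) = 1 - p^n + n·c·p^n, with v = p^(n-1) and b = (1 - v)/(1 - c·v). Define F(y) = p·((1 - c·y)/(1 - y))^(1/(n-1)) for y ∈ [0, b] and F(y) = 1 for y ∈ (b, 1]. Then for every y ∈ [0, 1), (1 - y)·F(y)^(n-1) + c·y·p^(n-1) ≤ v, with equality exactly for y ∈ [0, b]. -/
/-!
On `[0, b]` the equilibrium distribution is built so that `F(y)^(n-1) = v (1 - c y) / (1 - y)`, which
makes every firing distance there yield exactly `v`. Beyond `b` we have `F = 1`, and the payoff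
`(1 - y) + c y v` is affine in `y` and equals `v` precisely at `y = b`, so it drops strictly below `v`.
-/

lemma mul_rpow_one_div_natCast_pow {m : ℕ} (hm : m ≠ 0) (p : ℝ) {r : ℝ} (hr : 0 ≤ r) :
    (p * r ^ ((1 : ℝ) / m)) ^ m = p ^ m * r := by
  rw [mul_pow, one_div, Real.rpow_inv_natCast_pow hr hm]

lemma indifference_payoff_eq {m : ℕ} (hm : m ≠ 0) (p : ℝ) {c y : ℝ} (hy : y < 1)
    (hcy : c * y ≤ 1) :
    (1 - y) * (p * ((1 - c * y) / (1 - y)) ^ ((1 : ℝ) / m)) ^ m + c * y * p ^ m = p ^ m := by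
  have hy' : 1 - y ≠ 0 := by linarith
  rw [mul_rpow_one_div_natCast_pow hm p (div_nonneg (by linarith) (by linarith))]
  field_simp
  ring

lemma one_sub_add_mul_lt_iff_div_lt {c v y : ℝ} (hcv : c * v < 1) :
    (1 - y) + c * y * v < v ↔ (1 - v) / (1 - c * v) < y := by
  rw [div_lt_iff₀ (by linarith)]
  constructor <;> intro h <;> linarith

theorem silent_duel_no_profitable_deviation_general (n : ℕ) (hn : 2 ≤ n) (c : ℝ)
    (hc1 : c < 1) (p : ℝ) (hp0 : 0 < p) (hp1 : p < 1)
    (v b : ℝ)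
    (hv : v = p ^ (n - 1)) (hb : b = (1 - v) / (1 - c * v))
    (F : ℝ → ℝ)
    (hF : ∀ y, F y = if y ≤ b then p * ((1 - c * y) / (1 - y)) ^ ((1 : ℝ) / ((n : ℝ) - 1)) else 1) :
    ∀ y, 0 ≤ y → y < 1 →
      (1 - y) * F y ^ (n - 1) + c * y * p ^ (n - 1) ≤ v ∧
      ((1 - y) * F y ^ (n - 1) + c * y * p ^ (n - 1) = v ↔ y ∈ Set.Icc 0 b) := by
  intro y hy0 hy1
  have hv0 : 0 < v := hv ▸ pow_pos hp0 _
  have hv1 : v < 1 := hv ▸ pow_lt_one₀ hp0.le hp1 (by omega)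
  have hcv : c * v < 1 := by nlinarith
  have hcast : (n : ℝ) - 1 = ((n - 1 : ℕ) : ℝ) := by
    rw [Nat.cast_sub (by omega), Nat.cast_one]
  have payoff_eq (hyb : y ≤ b) : (1 - y) * F y ^ (n - 1) + c * y * p ^ (n - 1) = v := by
    rw [hF y, if_pos hyb, hcast, hv]
    exact indifference_payoff_eq (by omega) p hy1 (by nlinarith)
  have payoff_lt (hby : b < y) : (1 - y) * F y ^ (n - 1) + c * y * p ^ (n - 1) < v := by
    rw [hF y, if_neg hby.not_ge, one_pow, mul_one, ← hv]
    exact (one_sub_add_mul_lt_iff_div_lt hcv).2 (hb ▸ hby)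
  rcases le_or_gt y b with hyb | hby
  · exact ⟨(payoff_eq hyb).le, fun _ => ⟨hy0, hyb⟩, fun _ => payoff_eq hyb⟩
  · exact ⟨(payoff_lt hby).le, fun h => absurd h (payoff_lt hby).ne, fun h => absurd h.2 hby.not_ge⟩

theorem silent_duel_no_profitable_deviation (n : ℕ) (hn : 2 ≤ n) (c : ℝ)
    (hc0 : 0 ≤ c) (hc1 : c < 1) (p : ℝ) (hp0 : 0 < p) (hp1 : p < 1)
    (heq : n * p ^ (n - 1) = 1 - p ^ n + n * c * p ^ n) (v b : ℝ)
    (hv : v = p ^ (n - 1)) (hb : b = (1 - v) / (1 - c * v))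
    (F : ℝ → ℝ)
    (hF : ∀ y, F y = if y ≤ b then p * ((1 - c * y) / (1 - y)) ^ ((1 : ℝ) / ((n : ℝ) - 1)) else 1) :
    ∀ y, 0 ≤ y → y < 1 →
      (1 - y) * F y ^ (n - 1) + c * y * p ^ (n - 1) ≤ v ∧
      ((1 - y) * F y ^ (n - 1) + c * y * p ^ (n - 1) = v ↔ y ∈ Set.Icc 0 b) :=
  silent_duel_no_profitable_deviation_general n hn c hc1 p hp0 hp1 v b hv hb F hF
end

section
/- Let n ≥ 2 and 0 ≤ c < 1, and let v(c) = p(c)^(n-1) where 1/p(c) is the unique solution in (1, ∞) of z^n = 1 - n·c + n·z. Then v is strictly increasing in c on [0, 1). -/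
/-! The root satisfies `z ^ n - n z = 1 - n c`: the left side is strictly increasing in `z` on
`[1, ∞)` and the right side strictly decreasing in `c`, so the root decreases as `c` grows. -/

open Set

theorem strictMonoOn_pow_sub_natCast_mul {n : ℕ} (hn : 2 ≤ n) :
    StrictMonoOn (fun x : ℝ => x ^ n - n * x) (Ici 1) := by
  refine strictMonoOn_of_deriv_pos (convex_Ici 1) (by fun_prop) fun x hx => ?_
  rw [interior_Ici] at hx
  have hderiv : deriv (fun x : ℝ => x ^ n - n * x) x = n * x ^ (n - 1) - n := by
    simp [mul_comm]
  have hpow : (1 : ℝ) < x ^ (n - 1) := one_lt_pow₀ hx (by omega)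
  have hn0 : (0 : ℝ) < n := by positivity
  rw [hderiv]
  nlinarith

theorem silent_duel_value_increasing_in_c_general (n : ℕ) (hn : 2 ≤ n)
    (c₁ c₂ : ℝ) (hc : c₁ < c₂)
    (z₁ z₂ : ℝ) (hz₁ : 1 < z₁) (hz₂ : 1 < z₂)
    (heq₁ : z₁ ^ n = 1 - n * c₁ + n * z₁) (heq₂ : z₂ ^ n = 1 - n * c₂ + n * z₂) :
    (1 / z₁) ^ (n - 1) < (1 / z₂) ^ (n - 1) := by
  have hn0 : (0 : ℝ) < n := by positivity
  have hvalue : z₂ ^ n - n * z₂ < z₁ ^ n - n * z₁ := by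
    rw [heq₁, heq₂]
    nlinarith
  have hz : z₂ < z₁ :=
    ((strictMonoOn_pow_sub_natCast_mul hn).lt_iff_lt hz₂.le hz₁.le).mp hvalue
  have hinv : 1 / z₁ < 1 / z₂ := one_div_lt_one_div_of_lt (by linarith) hz
  exact pow_lt_pow_left₀ hinv (by positivity) (by omega)

theorem silent_duel_value_increasing_in_c (n : ℕ) (hn : 2 ≤ n)
    (c₁ c₂ : ℝ) (hc₁ : 0 ≤ c₁) (hc : c₁ < c₂) (hc₂ : c₂ < 1)
    (z₁ z₂ : ℝ) (hz₁ : 1 < z₁) (hz₂ : 1 < z₂)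
    (heq₁ : z₁ ^ n = 1 - n * c₁ + n * z₁) (heq₂ : z₂ ^ n = 1 - n * c₂ + n * z₂) :
    (1 / z₁) ^ (n - 1) < (1 / z₂) ^ (n - 1) :=
  silent_duel_value_increasing_in_c_general n hn c₁ c₂ hc z₁ z₂ hz₁ hz₂ heq₁ heq₂
end

section
/- For n ≥ 2 and c = 1/n: if the miss probability p = (1/n)^(1/(n-1)), then p is strictly increasing in n and p → 1 as n → ∞, while the equilibrium payoff v = 1/n → 0. -/
/-!
Writing `p(x) = (1/x)^(1/(x-1)) = exp (-(log x / (x - 1)))`, everything reduces to the function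
`log x / (x - 1)`: its derivative has the sign of `1 - x⁻¹ - log x < 0`, so it decreases strictly on
`(1, ∞)`, and it tends to `0` because `log` grows slower than any linear function.
-/

open Real Filter Set Topology

lemma one_sub_inv_lt_log {x : ℝ} (hx : 0 < x) (hx1 : x ≠ 1) : 1 - x⁻¹ < log x := by
  have h := log_lt_sub_one_of_pos (inv_pos.mpr hx) (inv_ne_one.mpr hx1)
  rw [log_inv] at h
  linarith

lemma strictAntiOn_log_div_sub_one : StrictAntiOn (fun x : ℝ => log x / (x - 1)) (Ioi 1) := by
  have hderiv : ∀ x ∈ Ioi (1 : ℝ),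
      HasDerivAt (fun x : ℝ => log x / (x - 1)) ((x⁻¹ * (x - 1) - log x * 1) / (x - 1) ^ 2) x :=
    fun x (hx : 1 < x) =>
      (hasDerivAt_log (by positivity)).div ((hasDerivAt_id x).sub_const 1) (sub_ne_zero.mpr hx.ne')
  refine strictAntiOn_of_deriv_neg (convex_Ioi 1)
    (fun x hx => (hderiv x hx).continuousAt.continuousWithinAt) fun x hx => ?_
  rw [interior_Ioi] at hx
  have hx : 1 < x := hx
  rw [(hderiv x hx).deriv]
  have hnum : x⁻¹ * (x - 1) = 1 - x⁻¹ := by field_simp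
  have hlog := one_sub_inv_lt_log (by positivity) hx.ne'
  have hden : 0 < (x - 1) ^ 2 := by nlinarith
  exact div_neg_of_neg_of_pos (by rw [hnum]; linarith) hden

lemma tendsto_log_div_sub_one_atTop : Tendsto (fun x : ℝ => log x / (x - 1)) atTop (𝓝 0) := by
  simpa [sub_eq_add_neg] using tendsto_pow_log_div_mul_add_atTop 1 (-1) 1 one_ne_zero

lemma one_div_rpow_one_div_sub_one {x : ℝ} (hx : 0 < x) :
    (1 / x) ^ (1 / (x - 1)) = exp (-(log x / (x - 1))) := by
  rw [rpow_def_of_pos (by positivity), one_div x, log_inv]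
  ring_nf

lemma strictMonoOn_one_div_rpow_one_div_sub_one :
    StrictMonoOn (fun x : ℝ => (1 / x) ^ (1 / (x - 1))) (Ioi 1) := by
  intro x (hx : 1 < x) y (hy : 1 < y) hxy
  simp only [one_div_rpow_one_div_sub_one (zero_lt_one.trans hx),
    one_div_rpow_one_div_sub_one (zero_lt_one.trans hy), exp_lt_exp, neg_lt_neg_iff]
  exact strictAntiOn_log_div_sub_one hx hy hxy

lemma tendsto_one_div_rpow_one_div_sub_one_atTop :
    Tendsto (fun x : ℝ => (1 / x) ^ (1 / (x - 1))) atTop (𝓝 1) := by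
  have hexp : Tendsto (fun x : ℝ => exp (-(log x / (x - 1)))) atTop (𝓝 1) := by
    simpa [Function.comp_def] using (continuous_exp.tendsto _).comp tendsto_log_div_sub_one_atTop.neg
  refine hexp.congr' ?_
  filter_upwards [eventually_gt_atTop 0] with x hx
  exact (one_div_rpow_one_div_sub_one hx).symm

theorem constant_sum_p_increasing_to_one :
    StrictMonoOn (fun n : ℕ => (1 / (n : ℝ)) ^ ((1 : ℝ) / ((n : ℝ) - 1))) (Set.Ici 2) ∧
      Filter.Tendsto (fun n : ℕ => (1 / (n : ℝ)) ^ ((1 : ℝ) / ((n : ℝ) - 1)))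
        Filter.atTop (nhds 1) ∧
      Filter.Tendsto (fun n : ℕ => (1 : ℝ) / n) Filter.atTop (nhds 0) := by
  refine ⟨fun m hm n hn hmn => ?_,
    tendsto_one_div_rpow_one_div_sub_one_atTop.comp tendsto_natCast_atTop_atTop,
    tendsto_one_div_atTop_nhds_zero_nat⟩
  have one_lt_cast {k : ℕ} (hk : k ∈ Ici 2) : (1 : ℝ) < k := by
    exact_mod_cast (show 1 < k from hk)
  exact strictMonoOn_one_div_rpow_one_div_sub_one (one_lt_cast hm) (one_lt_cast hn)
    (Nat.cast_lt.mpr hmn)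
end
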